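/- For every natural number m with m ≥ 2 and every real number d, the sum over j from 1 to m−1 of (d − 2 + 2cos(2πj/m)) · (1/(4 sin²(πj/m))) equals (d−2)·(m²−1)/12 + (m² − 6m + 5)/6. -/

import Mathlib

open Real Finset

/-!
Put `ζ = exp (2πi/m)` and `z = ζ ^ j` for `0 < j < m`. Then `(1 - z)² = -4 sin²(πj/m) z`, and two
summations by parts (the second differences of `k (m - k)` are constant, and `∑_{k<m} z^k = 0`)
give `(1 - z)² ∑_{k<m} k (m - k) z^k = 2 m z`. Hence `csc²(πj/m) = -(2/m) ∑_{k<m} k (m - k) ζ^{jk}`.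
Summing over `j` and using `∑_{0<j<m} ζ^{jk} = -1` for `0 < k < m` gives
`∑_{0<j<m} csc²(πj/m) = (2/m) ∑_{k<m} k (m - k) = (m² - 1)/3`; the theorem follows from
`cos 2θ = 1 - 2 sin² θ`.
-/

theorem one_sub_mul_sum_range_mul_pow {R : Type*} [CommRing R] (f : ℕ → R) (z : R) (n : ℕ) :
    (1 - z) * ∑ k ∈ range n, f k * z ^ k
      = f 0 - f n * z ^ n + z * ∑ k ∈ range n, (f (k + 1) - f k) * z ^ k := by
  induction n with
  | zero => simp
  | succ n ih =>
    rw [sum_range_succ, sum_range_succ, mul_add, ih]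
    ring

section RootOfUnity

variable {K : Type*} [Field K] {z : K} {m : ℕ}

theorem sum_Icc_pow_eq_neg_one_of_pow_eq_one (hm : 0 < m) (hzm : z ^ m = 1) (hz : z ≠ 1) :
    ∑ j ∈ Icc 1 (m - 1), z ^ j = -1 := by
  have hgeom : ∑ j ∈ range m, z ^ j = 0 := by
    rw [geom_sum_eq hz, hzm, sub_self, zero_div]
  rw [range_eq_Ico, sum_eq_sum_Ico_succ_bot hm, pow_zero] at hgeom
  change ∑ j ∈ Ico 1 m, z ^ j = -1
  linear_combination hgeom

theorem sq_one_sub_mul_sum_range_mul_pow (hzm : z ^ m = 1) (hz : z ≠ 1) :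
    (1 - z) ^ 2 * ∑ k ∈ range m, (k : K) * (m - k) * z ^ k = 2 * m * z := by
  have hgeom : ∑ k ∈ range m, z ^ k = 0 := by
    rw [geom_sum_eq hz, hzm, sub_self, zero_div]
  have first : (1 - z) * ∑ k ∈ range m, (k : K) * (m - k) * z ^ k
      = z * ∑ k ∈ range m, ((m : K) - 2 * k - 1) * z ^ k := by
    rw [one_sub_mul_sum_range_mul_pow (fun k : ℕ => (k : K) * (m - k))]
    push_cast
    ring_nf
  have second : (1 - z) * ∑ k ∈ range m, ((m : K) - 2 * k - 1) * z ^ k = 2 * m := by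
    rw [one_sub_mul_sum_range_mul_pow (fun k : ℕ => (m : K) - 2 * k - 1), hzm]
    push_cast
    simp only [show ∀ k : ℕ, ((m : K) - 2 * (k + 1) - 1 - (m - 2 * k - 1)) * z ^ k = -2 * z ^ k
      from fun k => by ring, ← mul_sum, hgeom]
    ring
  calc (1 - z) ^ 2 * ∑ k ∈ range m, (k : K) * (m - k) * z ^ k
      = z * ((1 - z) * ∑ k ∈ range m, ((m : K) - 2 * k - 1) * z ^ k) := by
        rw [sq, mul_assoc, first]; ring
    _ = 2 * m * z := by rw [second]; ring

end RootOfUnity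

theorem six_mul_sum_range_mul_sub {R : Type*} [CommRing R] (n : ℕ) :
    6 * ∑ k ∈ range n, (k : R) * (n - k) = n * (n ^ 2 - 1) := by
  have hid : ∀ n : ℕ, 2 * ∑ k ∈ range n, (k : R) = n * (n - 1) := by
    intro n
    induction n with
    | zero => simp
    | succ n ih => rw [sum_range_succ, mul_add, ih]; push_cast; ring
  have hsq : ∀ n : ℕ, 6 * ∑ k ∈ range n, (k : R) ^ 2 = n * (n - 1) * (2 * n - 1) := by
    intro n
    induction n with
    | zero => simp
    | succ n ih => rw [sum_range_succ, mul_add, ih]; push_cast; ring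
  have hsplit : ∑ k ∈ range n, (k : R) * (n - k)
      = n * ∑ k ∈ range n, (k : R) - ∑ k ∈ range n, (k : R) ^ 2 := by
    rw [mul_sum, ← sum_sub_distrib]
    exact sum_congr rfl fun k _ => by ring
  rw [hsplit]
  linear_combination (3 * (n : R)) * hid n - hsq n

theorem Complex.sq_one_sub_exp_two_mul_mul_I (θ : ℂ) :
    (1 - Complex.exp (2 * θ * Complex.I)) ^ 2
      = -4 * Complex.sin θ ^ 2 * Complex.exp (2 * θ * Complex.I) := by
  have hsq : Complex.exp (2 * θ * Complex.I) = Complex.exp (θ * Complex.I) ^ 2 := by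
    rw [← Complex.exp_nat_mul]; push_cast; ring_nf
  have hinv : Complex.exp (-θ * Complex.I) * Complex.exp (θ * Complex.I) = 1 := by
    rw [← Complex.exp_add]; ring_nf; exact Complex.exp_zero
  rw [hsq, Complex.sin]
  linear_combination (2 * Complex.exp (θ * Complex.I) ^ 2 - 1
      - Complex.exp (-θ * Complex.I) * Complex.exp (θ * Complex.I)) * hinv
    + ((Complex.exp (-θ * Complex.I) - Complex.exp (θ * Complex.I)) ^ 2
      * Complex.exp (θ * Complex.I) ^ 2) * Complex.I_sq

theorem sin_pi_mul_div_ne_zero {j m : ℕ} (hj : 0 < j) (hjm : j < m) : sin (π * j / m) ≠ 0 := by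
  have hm : (0 : ℝ) < m := by exact_mod_cast hj.trans hjm
  refine (sin_pos_of_pos_of_lt_pi (by positivity) ?_).ne'
  rw [div_lt_iff₀ hm]
  exact mul_lt_mul_of_pos_left (by exact_mod_cast hjm) pi_pos

open Complex in
theorem sin_sq_mul_sum_range_mul_pow_exp {j m : ℕ} (hj : 0 < j) (hjm : j < m) :
    Complex.sin (π * j / m) ^ 2 * ∑ k ∈ range m, (k : ℂ) * (m - k) * (exp (2 * π * I / m) ^ j) ^ k
      = -m / 2 := by
  have hζ := isPrimitiveRoot_exp m (hj.trans hjm).ne'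
  set z := exp (2 * π * I / m) ^ j
  have hzm : z ^ m = 1 := by rw [pow_right_comm, hζ.pow_eq_one, one_pow]
  have hz : z ≠ 1 := hζ.pow_ne_one_of_pos_of_lt hj.ne' hjm
  have hz_exp : z = exp (2 * (π * j / m) * I) := by
    simp only [z, ← Complex.exp_nat_mul]; ring_nf
  have key := sq_one_sub_mul_sum_range_mul_pow hzm hz
  rw [hz_exp, sq_one_sub_exp_two_mul_mul_I, ← hz_exp] at key
  have hz0 : z ≠ 0 := hz_exp ▸ exp_ne_zero _
  apply mul_right_cancel₀ hz0
  linear_combination key / (-4)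

theorem sum_Icc_one_div_sin_sq {m : ℕ} (hm : 0 < m) :
    ∑ j ∈ Icc 1 (m - 1), 1 / sin (π * j / m) ^ 2 = ((m : ℝ) ^ 2 - 1) / 3 := by
  have hm0 : (m : ℂ) ≠ 0 := by exact_mod_cast hm.ne'
  set ζ := Complex.exp (2 * π * Complex.I / m) with hζ_def
  have hζ := Complex.isPrimitiveRoot_exp m hm.ne'
  have hpoint : ∀ j ∈ Icc 1 (m - 1), 1 / Complex.sin (π * j / m) ^ 2
      = -(2 / m) * ∑ k ∈ range m, (k : ℂ) * (m - k) * (ζ ^ j) ^ k := by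
    intro j hj
    obtain ⟨hj0, hjm⟩ := mem_Icc.mp hj
    have hfourier := sin_sq_mul_sum_range_mul_pow_exp (m := m) hj0 (by omega)
    rw [← hζ_def] at hfourier
    have hsin : Complex.sin (π * j / m) ≠ 0 := by
      exact_mod_cast sin_pi_mul_div_ne_zero (m := m) hj0 (by omega)
    field_simp
    linear_combination 2 * hfourier
  have hinner : ∀ k ∈ range m, (k : ℂ) * (m - k) * ∑ j ∈ Icc 1 (m - 1), (ζ ^ k) ^ j
      = -((k : ℂ) * (m - k)) := by
    intro k hk
    rcases Nat.eq_zero_or_pos k with rfl | hk0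
    · simp
    rw [sum_Icc_pow_eq_neg_one_of_pow_eq_one hm (by rw [pow_right_comm, hζ.pow_eq_one, one_pow])
      (hζ.pow_ne_one_of_pos_of_lt hk0.ne' (mem_range.mp hk)), mul_neg_one]
  apply Complex.ofReal_injective
  push_cast
  calc ∑ j ∈ Icc 1 (m - 1), 1 / Complex.sin (π * j / m) ^ 2
      = -(2 / m) * ∑ k ∈ range m, (k : ℂ) * (m - k) * ∑ j ∈ Icc 1 (m - 1), (ζ ^ k) ^ j := by
        rw [sum_congr rfl hpoint, ← mul_sum, sum_comm]
        simp only [mul_sum, pow_right_comm ζ]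
    _ = -(2 / m) * -(6 * ∑ k ∈ range m, (k : ℂ) * (m - k)) / 6 := by
        rw [sum_congr rfl hinner, sum_neg_distrib]; ring
    _ = (m ^ 2 - 1) / 3 := by
        rw [six_mul_sum_range_mul_sub]; field_simp; ring

/-- Proposition 3.3 (analytic content): for every integer `m ≥ 2` and every real `d`,
`∑_{j=1}^{m-1} (d − 2 + 2cos(2πj/m)) · (1/(4 sin²(πj/m)))
  = (d−2)(m²−1)/12 + (m² − 6m + 5)/6`. -/
theorem b01_codim_two_sum (m : ℕ) (hm : 2 ≤ m) (d : ℝ) :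
    ∑ j ∈ Finset.Icc 1 (m - 1),
        (d - 2 + 2 * Real.cos (2 * π * j / m)) * (1 / (4 * (Real.sin (π * j / m)) ^ 2))
      = (d - 2) * ((m : ℝ) ^ 2 - 1) / 12 + ((m : ℝ) ^ 2 - 6 * m + 5) / 6 := by
  have hterm : ∀ j ∈ Icc 1 (m - 1),
      (d - 2 + 2 * cos (2 * π * j / m)) * (1 / (4 * sin (π * j / m) ^ 2))
        = d / 4 * (1 / sin (π * j / m) ^ 2) - 1 := by
    intro j hj
    obtain ⟨hj0, hjm⟩ := mem_Icc.mp hj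
    have hsin := sin_pi_mul_div_ne_zero (m := m) hj0 (by omega)
    rw [show 2 * π * j / m = 2 * (π * j / m) by ring, cos_two_mul_eq_one_sub]
    field_simp
    ring
  have hcard : ((Icc 1 (m - 1)).card : ℝ) = m - 1 := by
    rw [Nat.card_Icc, Nat.add_sub_cancel, Nat.cast_sub (by omega), Nat.cast_one]
  rw [sum_congr rfl hterm, sum_sub_distrib, ← mul_sum, sum_Icc_one_div_sin_sq (by omega),
    sum_const, nsmul_one, hcard]
  ring
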